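/- arXiv:2411.17978 — 2 statements merged into one kernel-verified Lean document; each statement's English description precedes it below -/
import Mathlib

section
/- Let $(X,\mathcal{A},\mu)$ be a probability space and let $u : X \to [0,\infty)$ be a bounded measurable function with essential supremum $M = \|u\|_{L^\infty(\mu)}$. Let $\tau > 1$, $\beta \ge 0$, and $A, K \ge 1$ be real numbers such that for every real $q \ge 1$ one has $\|u\|_{L^{q\tau}(\mu)} \le (Aq)^{1/q} K^{1/q} M^{\beta/q} \|u\|_{L^{q}(\mu)}$. Then $M \le A^{\tau/(\tau-1)} \, \tau^{\tau/(\tau-1)^2} \, K^{\tau/(\tau-1)} \, M^{\beta\tau/(\tau-1)} \, \|u\|_{L^1(\mu)}$. -/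
/-!
Taking `q = τ ^ k` in the hypothesis and chaining the bounds gives
`‖u‖_{τ ^ n} ≤ ∏_{k < n} (C τ ^ k) ^ {τ ^ -k} ‖u‖_1` with `C = A K M ^ β`. The exponents sum to
the series `∑ τ ^ -k = τ / (τ - 1)` and `∑ k τ ^ -k = τ / (τ - 1) ^ 2`, so the products converge
to `C ^ {τ / (τ - 1)} τ ^ {τ / (τ - 1) ^ 2}`. On the other side `‖u‖_p → ‖u‖_∞ = M`: by Markov's
inequality `‖u‖_p ≥ c μ{c ≤ u} ^ {1 / p}` for every level `c < M`, and `μ{c ≤ u} > 0`.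
-/

open MeasureTheory Real Filter Finset Topology

theorem le_prod_range_mul_of_le_mul {a c : ℕ → ℝ} (hc : ∀ n, 0 ≤ c n)
    (h : ∀ n, a (n + 1) ≤ c n * a n) (n : ℕ) : a n ≤ (∏ k ∈ range n, c k) * a 0 := by
  induction n with
  | zero => simp
  | succ n ih =>
    calc a (n + 1) ≤ c n * a n := h n
      _ ≤ c n * ((∏ k ∈ range n, c k) * a 0) := mul_le_mul_of_nonneg_left ih (hc n)
      _ = (∏ k ∈ range (n + 1), c k) * a 0 := by rw [prod_range_succ]; ring

theorem mul_pow_rpow_one_div_pow {C τ : ℝ} (hC : 0 < C) (hτ : 0 < τ) (k : ℕ) :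
    (C * τ ^ k) ^ (1 / τ ^ k) = C ^ (τ⁻¹ ^ k) * τ ^ ((k : ℝ) * τ⁻¹ ^ k) := by
  rw [one_div, ← inv_pow, mul_rpow hC.le (by positivity), ← rpow_natCast τ k,
    ← rpow_mul hτ.le]

theorem prod_range_mul_pow_rpow_one_div_pow {C τ : ℝ} (hC : 0 < C) (hτ : 0 < τ) (n : ℕ) :
    ∏ k ∈ range n, (C * τ ^ k) ^ (1 / τ ^ k) =
      C ^ (∑ k ∈ range n, τ⁻¹ ^ k) * τ ^ (∑ k ∈ range n, (k : ℝ) * τ⁻¹ ^ k) := by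
  simp only [mul_pow_rpow_one_div_pow hC hτ, prod_mul_distrib, rpow_sum_of_pos hC,
    rpow_sum_of_pos hτ]

theorem tendsto_prod_range_mul_pow_rpow_one_div_pow {C τ : ℝ} (hC : 0 < C) (hτ : 1 < τ) :
    Tendsto (fun n ↦ ∏ k ∈ range n, (C * τ ^ k) ^ (1 / τ ^ k)) atTop
      (𝓝 (C ^ (τ / (τ - 1)) * τ ^ (τ / (τ - 1) ^ 2))) := by
  have hτ₀ : 0 < τ := by linarith
  have hr₀ : 0 ≤ τ⁻¹ := inv_nonneg.mpr hτ₀.le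
  have hr₁ : τ⁻¹ < 1 := inv_lt_one_of_one_lt₀ hτ
  have hgeom : HasSum (fun k : ℕ ↦ τ⁻¹ ^ k) (τ / (τ - 1)) := by
    convert hasSum_geometric_of_lt_one hr₀ hr₁ using 1
    field_simp
  have harith : HasSum (fun k : ℕ ↦ (k : ℝ) * τ⁻¹ ^ k) (τ / (τ - 1) ^ 2) := by
    have h := hasSum_coe_mul_geometric_of_norm_lt_one (𝕜 := ℝ) (by rwa [norm_of_nonneg hr₀])
    rwa [show τ⁻¹ / (1 - τ⁻¹) ^ 2 = τ / (τ - 1) ^ 2 by field_simp] at h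
  simp only [prod_range_mul_pow_rpow_one_div_pow hC hτ₀]
  exact (tendsto_const_nhds.rpow hgeom.tendsto_sum_nat (Or.inl hC.ne')).mul
    (tendsto_const_nhds.rpow harith.tendsto_sum_nat (Or.inl hτ₀.ne'))

section Measure

variable {X : Type*} [MeasurableSpace X] {μ : Measure X} {u : X → ℝ}

theorem mul_measureReal_rpow_le_integral_rpow_rpow [IsFiniteMeasure μ] (hu : 0 ≤ᵐ[μ] u)
    {p : ℝ} (hp : 0 < p) (hint : Integrable (fun x ↦ u x ^ p) μ) {c : ℝ} (hc : 0 ≤ c) :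
    c * μ.real {x | c ≤ u x} ^ (1 / p) ≤ (∫ x, u x ^ p ∂μ) ^ (1 / p) := by
  have hmarkov : c ^ p * μ.real {x | c ≤ u x} ≤ ∫ x, u x ^ p ∂μ :=
    calc c ^ p * μ.real {x | c ≤ u x}
        ≤ c ^ p * μ.real {x | c ^ p ≤ u x ^ p} :=
          mul_le_mul_of_nonneg_left (measureReal_mono (fun x hx ↦ rpow_le_rpow hc hx hp.le))
            (by positivity)
      _ ≤ ∫ x, u x ^ p ∂μ :=
          mul_meas_ge_le_integral_of_nonneg (hu.mono fun x hx ↦ rpow_nonneg hx p) hint _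
  calc c * μ.real {x | c ≤ u x} ^ (1 / p)
      = (c ^ p * μ.real {x | c ≤ u x}) ^ (1 / p) := by
        rw [mul_rpow (by positivity) measureReal_nonneg, ← rpow_mul hc, mul_one_div_cancel hp.ne',
          rpow_one]
    _ ≤ (∫ x, u x ^ p ∂μ) ^ (1 / p) := rpow_le_rpow (by positivity) hmarkov (by positivity)

theorem integrable_rpow_of_le [IsFiniteMeasure μ] (hu : Measurable u) (hu_nonneg : ∀ x, 0 ≤ u x)
    {B : ℝ} (hB : ∀ x, u x ≤ B) {p : ℝ} (hp : 0 ≤ p) : Integrable (fun x ↦ u x ^ p) μ :=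
  .of_bound (hu.pow_const p).aestronglyMeasurable (B ^ p) <| .of_forall fun x ↦ by
    rw [norm_of_nonneg (rpow_nonneg (hu_nonneg x) p)]
    exact rpow_le_rpow (hu_nonneg x) (hB x) hp

theorem measure_le_ne_zero_of_lt_essSup [NeZero μ] (hu : 0 ≤ᵐ[μ] u) {c : ℝ}
    (hc : c < essSup u μ) : μ {x | c ≤ u x} ≠ 0 := by
  intro h
  have hlt : ∀ᵐ x ∂μ, u x ≤ c := by
    refine ae_iff.mpr (measure_mono_null (fun x hx ↦ ?_) h)
    exact (not_le.mp hx).le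
  exact hc.not_ge (essSup_le_of_ae_le c hlt (isCoboundedUnder_le_of_eventually_le _ hu))

theorem essSup_le_of_rpow_integral_le [IsFiniteMeasure μ] [NeZero μ] (hu : 0 ≤ᵐ[μ] u)
    {p b : ℕ → ℝ} {L : ℝ} (hp : Tendsto p atTop atTop)
    (hint : ∀ n, Integrable (fun x ↦ u x ^ p n) μ) (hb : Tendsto b atTop (𝓝 L))
    (hle : ∀ n, (∫ x, u x ^ p n ∂μ) ^ (1 / p n) ≤ b n) :
    essSup u μ ≤ L := by
  refine le_of_forall_lt_imp_le_of_dense fun c hc ↦ ?_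
  rcases le_or_gt c 0 with hc₀ | hc₀
  · exact hc₀.trans (ge_of_tendsto' hb fun n ↦ (rpow_nonneg (integral_nonneg_of_ae
      (hu.mono fun x hx ↦ rpow_nonneg hx _)) _).trans (hle n))
  have hm : 0 < μ.real {x | c ≤ u x} :=
    ENNReal.toReal_pos (measure_le_ne_zero_of_lt_essSup hu hc) (measure_ne_top μ _)
  have hlow : Tendsto (fun n ↦ c * μ.real {x | c ≤ u x} ^ (1 / p n)) atTop (𝓝 c) := by
    have hexp : Tendsto (fun n ↦ 1 / p n) atTop (𝓝 0) :=
      (tendsto_inv_atTop_zero.comp hp).congr fun n ↦ (one_div (p n)).symm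
    simpa using (tendsto_const_nhds.rpow hexp (Or.inl hm.ne')).const_mul c
  refine le_of_tendsto_of_tendsto hlow hb ?_
  filter_upwards [hp.eventually_gt_atTop 0] with n hpn
  exact (mul_measureReal_rpow_le_integral_rpow_rpow hu hpn (hint n) hc₀.le).trans (hle n)

end Measure

theorem moser_iteration_limit_general
    {X : Type*} [MeasurableSpace X] (μ : Measure X) [IsProbabilityMeasure μ]
    (u : X → ℝ) (hu_meas : Measurable u) (hu_nonneg : ∀ x, 0 ≤ u x)
    (hu_bdd : ∃ C : ℝ, ∀ x, u x ≤ C)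
    (M : ℝ) (hM : M = essSup u μ)
    (τ β A K : ℝ) (hτ : 1 < τ) (hA : 1 ≤ A) (hK : 1 ≤ K)
    (hiter : ∀ q : ℝ, 1 ≤ q →
      (∫ x, u x ^ (q * τ) ∂μ) ^ (1 / (q * τ)) ≤
        (A * q) ^ (1 / q) * K ^ (1 / q) * M ^ (β / q) * (∫ x, u x ^ q ∂μ) ^ (1 / q)) :
    M ≤ A ^ (τ / (τ - 1)) * τ ^ (τ / (τ - 1) ^ 2) * K ^ (τ / (τ - 1)) *
      M ^ (β * τ / (τ - 1)) * ∫ x, u x ∂μ := by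
  obtain ⟨B, hB⟩ := hu_bdd
  have hτ₀ : 0 < τ := by linarith
  have hu_ae : 0 ≤ᵐ[μ] u := .of_forall hu_nonneg
  have hM_nonneg : 0 ≤ M := hM ▸ le_limsup_of_frequently_le hu_ae.frequently
    (isBoundedUnder_of_eventually_le (.of_forall hB))
  rcases hM_nonneg.eq_or_lt with rfl | hM_pos
  · have : 0 ≤ ∫ x, u x ∂μ := integral_nonneg hu_nonneg
    positivity
  set C := A * K * M ^ β
  have hC : 0 < C := by positivity
  have hfactor : ∀ q, 0 < q → (A * q) ^ (1 / q) * K ^ (1 / q) * M ^ (β / q) = (C * q) ^ (1 / q) :=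
    fun q hq ↦ by
      rw [show C * q = A * q * K * M ^ β by ring, mul_rpow (x := A * q * K) (by positivity)
        (by positivity), mul_rpow (x := A * q) (by positivity) (by positivity),
        ← rpow_mul hM_nonneg, mul_one_div]
  have hstep : ∀ n : ℕ, (∫ x, u x ^ τ ^ (n + 1) ∂μ) ^ (1 / τ ^ (n + 1)) ≤
      (C * τ ^ n) ^ (1 / τ ^ n) * (∫ x, u x ^ τ ^ n ∂μ) ^ (1 / τ ^ n) := fun n ↦ by
    simpa only [← pow_succ, hfactor _ (pow_pos hτ₀ n)] using hiter (τ ^ n) (one_le_pow₀ hτ.le)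
  have hbound := le_prod_range_mul_of_le_mul (a := fun n ↦ (∫ x, u x ^ τ ^ n ∂μ) ^ (1 / τ ^ n))
    (fun n ↦ rpow_nonneg (mul_pos hC (pow_pos hτ₀ n)).le _) hstep
  simp only [pow_zero, rpow_one, div_one] at hbound
  calc M = essSup u μ := hM
    _ ≤ C ^ (τ / (τ - 1)) * τ ^ (τ / (τ - 1) ^ 2) * ∫ x, u x ∂μ :=
      essSup_le_of_rpow_integral_le hu_ae (tendsto_pow_atTop_atTop_of_one_lt hτ)
        (fun n ↦ integrable_rpow_of_le hu_meas hu_nonneg hB (by positivity))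
        ((tendsto_prod_range_mul_pow_rpow_one_div_pow hC hτ).mul_const _) hbound
    _ = _ := by
      rw [mul_rpow (by positivity) (by positivity), mul_rpow (by positivity) (by positivity),
        ← rpow_mul hM_nonneg, mul_div_assoc]
      ring

/-- Limiting Moser-type iteration estimate (Step 2 of the proof of the linear `C⁰`-bound for the
inverse Monge-Ampère flow, abstracted to measure theory): if a bounded nonnegative measurable
function `u` on a probability space, with essential supremum `M`, satisfies
`‖u‖_{qτ} ≤ (Aq)^{1/q} K^{1/q} M^{β/q} ‖u‖_q` for all `q ≥ 1`, then
`M ≤ A^{τ/(τ-1)} τ^{τ/(τ-1)²} K^{τ/(τ-1)} M^{βτ/(τ-1)} ‖u‖_{L¹}`. -/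
theorem moser_iteration_limit
    {X : Type*} [MeasurableSpace X] (μ : Measure X) [IsProbabilityMeasure μ]
    (u : X → ℝ) (hu_meas : Measurable u) (hu_nonneg : ∀ x, 0 ≤ u x)
    (hu_bdd : ∃ C : ℝ, ∀ x, u x ≤ C)
    (M : ℝ) (hM : M = essSup u μ)
    (τ β A K : ℝ) (hτ : 1 < τ) (hβ : 0 ≤ β) (hA : 1 ≤ A) (hK : 1 ≤ K)
    (hiter : ∀ q : ℝ, 1 ≤ q →
      (∫ x, u x ^ (q * τ) ∂μ) ^ (1 / (q * τ)) ≤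
        (A * q) ^ (1 / q) * K ^ (1 / q) * M ^ (β / q) * (∫ x, u x ^ q ∂μ) ^ (1 / q)) :
    M ≤ A ^ (τ / (τ - 1)) * τ ^ (τ / (τ - 1) ^ 2) * K ^ (τ / (τ - 1)) *
      M ^ (β * τ / (τ - 1)) * ∫ x, u x ∂μ :=
  moser_iteration_limit_general μ u hu_meas hu_nonneg hu_bdd M hM τ β A K hτ hA hK hiter
end

section
/- Let $(X,\mathcal{A},\mu)$ be a probability space and let $u : X \to [0,\infty)$ be a bounded measurable function, not $\mu$-almost everywhere equal to $0$, with essential supremum $M = \|u\|_{L^\infty(\mu)}$. Let $\tau > 1$, $\beta \ge 0$, and $A, K \ge 1$ be real numbers such that $\gamma := \beta\tau/(\tau-1) < 1$ and such that for every real $q \ge 1$ one has $\|u\|_{L^{q\tau}(\mu)} \le (Aq)^{1/q} K^{1/q} M^{\beta/q} \|u\|_{L^{q}(\mu)}$. If moreover $\|u\|_{L^1(\mu)} \le e^{L}$ for some real number $L$, then $\log M \le \frac{1}{1-\gamma}\Big(\frac{\tau}{\tau-1}\log(AK) + \frac{\tau}{(\tau-1)^2}\log\tau + L\Big)$. -/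
/-!
Moser iteration. With `bₙ = log ‖u‖_{L^{τⁿ}}`, the iteration inequality at `q = τⁿ` reads
`bₙ₊₁ ≤ bₙ + τ⁻ⁿ (log (A K M^β) + n log τ)`, and `b₀ ≤ L`. Summing the two geometric series bounds
every `bₙ` by `L + τ/(τ-1) log (A K M^β) + τ/(τ-1)² log τ`. Conversely, by Chebyshev,
`‖u‖_{L^q} ≥ c μ{u > c}^{1/q}`, so `liminf bₙ ≥ log c` for every `c < M`, and `log M` obeys the
same bound. Its right-hand side contains `γ log M` with `γ < 1`, which is then absorbed.
-/

open MeasureTheory Real Filter Finset Topology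

lemma le_add_of_succ_le_add_of_hasSum {b g ℓ : ℕ → ℝ} {S l : ℝ}
    (hstep : ∀ n, b (n + 1) ≤ b n + g n) (hg : HasSum g S)
    (hlow : ∀ n, ℓ n ≤ b n) (hℓ : Tendsto ℓ atTop (𝓝 l)) : l ≤ b 0 + S := by
  have hpartial : ∀ n, b n ≤ b 0 + ∑ k ∈ range n, g k := fun n => by
    have := sum_le_sum fun k (_ : k ∈ range n) => sub_le_iff_le_add'.2 (hstep k)
    rw [sum_range_sub] at this
    linarith
  exact le_of_tendsto_of_tendsto' hℓ (tendsto_const_nhds.add hg.tendsto_sum_nat)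
    fun n => (hlow n).trans (hpartial n)

lemma hasSum_inv_pow_of_one_lt {τ : ℝ} (hτ : 1 < τ) :
    HasSum (fun n : ℕ => τ⁻¹ ^ n) (τ / (τ - 1)) := by
  convert hasSum_geometric_of_lt_one (inv_nonneg.2 (by linarith)) (inv_lt_one_of_one_lt₀ hτ)
    using 1
  field_simp

lemma hasSum_coe_mul_inv_pow_of_one_lt {τ : ℝ} (hτ : 1 < τ) :
    HasSum (fun n : ℕ => n * τ⁻¹ ^ n) (τ / (τ - 1) ^ 2) := by
  have hr : ‖τ⁻¹‖ < 1 := by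
    rw [norm_inv, Real.norm_of_nonneg (by linarith)]; exact inv_lt_one_of_one_lt₀ hτ
  have hsum : τ⁻¹ / (1 - τ⁻¹) ^ 2 = τ / (τ - 1) ^ 2 := by
    have : τ - 1 ≠ 0 := by linarith
    field_simp
  simpa only [hsum] using hasSum_coe_mul_geometric_of_norm_lt_one (𝕜 := ℝ) hr

lemma log_le_of_forall_lt_log_le {M E : ℝ} (hM : 0 < M)
    (h : ∀ c, 0 < c → c < M → log c ≤ E) : log M ≤ E := by
  rw [log_le_iff_le_exp hM]
  refine le_of_forall_lt_imp_le_of_dense fun c hc => ?_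
  rcases le_or_gt c 0 with hc0 | hc0
  · exact hc0.trans (exp_pos E).le
  · exact (log_le_iff_le_exp hc0).1 (h c hc0 hc)

lemma log_div_le_of_rpow_le {P q τ I J : ℝ} (hq : 0 < q) (hP : 0 < P)
    (hI : 0 < I) (hJ : 0 < J) (h : J ^ (1 / (q * τ)) ≤ (P * q) ^ (1 / q) * I ^ (1 / q)) :
    log J / (q * τ) ≤ log I / q + (log P + log q) / q := by
  have := log_le_log (by positivity) h
  rw [log_rpow hJ, log_mul (by positivity) (by positivity), log_rpow (by positivity),
    log_rpow hI, log_mul hP.ne' hq.ne'] at this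
  calc log J / (q * τ) = 1 / (q * τ) * log J := by ring
    _ ≤ _ := this
    _ = _ := by ring

lemma log_le_of_moment_iteration {I : ℝ → ℝ} {τ P c δ : ℝ} (hτ : 1 < τ) (hP : 0 < P)
    (hc : 0 < c) (hδ : 0 < δ) (hlow : ∀ q, 1 ≤ q → c ^ q * δ ≤ I q)
    (hstep : ∀ q, 1 ≤ q → I (q * τ) ^ (1 / (q * τ)) ≤ (P * q) ^ (1 / q) * I q ^ (1 / q))
    {L : ℝ} (hI₁ : I 1 ≤ exp L) :
    log c ≤ L + τ / (τ - 1) * log P + τ / (τ - 1) ^ 2 * log τ := by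
  have hq : ∀ n : ℕ, 1 ≤ τ ^ n := fun n => one_le_pow₀ hτ.le
  have hqpos : ∀ n : ℕ, 0 < τ ^ n := fun n => zero_lt_one.trans_le (hq n)
  have hI : ∀ n : ℕ, 0 < I (τ ^ n) := fun n =>
    (mul_pos (rpow_pos_of_pos hc _) hδ).trans_le (hlow _ (hq n))
  have hinv : ∀ n : ℕ, τ⁻¹ ^ n = 1 / τ ^ n := fun n => by rw [inv_pow, one_div]
  set b : ℕ → ℝ := fun n => log (I (τ ^ n)) / τ ^ n with hb
  have hb_succ : ∀ n, b (n + 1) ≤ b n + (log P * τ⁻¹ ^ n + log τ * (n * τ⁻¹ ^ n)) := by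
    intro n
    have h := log_div_le_of_rpow_le (hqpos n) hP (hI n) (pow_succ τ n ▸ hI (n + 1))
      (hstep _ (hq n))
    rw [← pow_succ, log_pow] at h
    simp only [hb, hinv]
    linarith [show (log P + n * log τ) / τ ^ n =
      log P * (1 / τ ^ n) + log τ * (n * (1 / τ ^ n)) by ring]
  have hb_low : ∀ n, log c + log δ * τ⁻¹ ^ n ≤ b n := by
    intro n
    have h := log_le_log (mul_pos (rpow_pos_of_pos hc _) hδ) (hlow _ (hq n))
    rw [log_mul (rpow_pos_of_pos hc _).ne' hδ.ne', log_rpow hc] at h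
    simp only [hb, hinv]
    rw [le_div_iff₀ (hqpos n)]
    calc (log c + log δ * (1 / τ ^ n)) * τ ^ n = τ ^ n * log c + log δ := by
          field_simp
      _ ≤ _ := h
  have hlim : Tendsto (fun n : ℕ => log c + log δ * τ⁻¹ ^ n) atTop (𝓝 (log c)) := by
    simpa using tendsto_const_nhds.add ((tendsto_pow_atTop_nhds_zero_of_lt_one
      (inv_nonneg.2 (by linarith)) (inv_lt_one_of_one_lt₀ hτ)).const_mul (log δ))
  have hsum := ((hasSum_inv_pow_of_one_lt hτ).mul_left (log P)).add
    ((hasSum_coe_mul_inv_pow_of_one_lt hτ).mul_left (log τ))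
  have := le_add_of_succ_le_add_of_hasSum hb_succ hsum hb_low hlim
  have hb₀ : b 0 ≤ L := by
    simpa only [hb, pow_zero, div_one] using (log_le_iff_le_exp (pow_zero τ ▸ hI 0)).2 hI₁
  linarith

lemma le_one_div_one_sub_mul_of_le_add_mul {x a γ : ℝ} (hγ : γ < 1) (h : x ≤ a + γ * x) :
    x ≤ 1 / (1 - γ) * a := by
  rw [one_div, inv_mul_eq_div, le_div_iff₀ (sub_pos.2 hγ)]
  linarith

lemma mul_rpow_one_div_of_nonneg {A K M β q : ℝ} (hA : 0 ≤ A) (hK : 0 ≤ K) (hM : 0 ≤ M)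
    (hq : 0 ≤ q) :
    (A * q) ^ (1 / q) * K ^ (1 / q) * M ^ (β / q) = (A * K * M ^ β * q) ^ (1 / q) := by
  rw [mul_rpow (x := A * K * M ^ β) (by positivity) hq,
    mul_rpow (x := A * K) (by positivity) (by positivity), mul_rpow hA hK, mul_rpow hA hq,
    ← rpow_mul hM, mul_one_div]
  ring

section

variable {X : Type*} [MeasurableSpace X] {μ : Measure X} {u : X → ℝ}

lemma integrable_rpow_of_le_s2 [IsFiniteMeasure μ] (hu : Measurable u) (hu₀ : ∀ x, 0 ≤ u x)
    {C : ℝ} (hC : ∀ x, u x ≤ C) {q : ℝ} (hq : 0 ≤ q) : Integrable (fun x => u x ^ q) μ :=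
  .of_bound ((continuous_rpow_const hq).measurable.comp hu).aestronglyMeasurable (C ^ q)
    (ae_of_all _ fun x => by
      rw [norm_of_nonneg (rpow_nonneg (hu₀ x) q)]
      exact rpow_le_rpow (hu₀ x) (hC x) hq)

lemma rpow_mul_measureReal_lt_le_integral_rpow [IsFiniteMeasure μ] (hu₀ : ∀ x, 0 ≤ u x)
    {c q : ℝ} (hint : Integrable (fun x => u x ^ q) μ) (hc : 0 ≤ c) (hq : 0 ≤ q) :
    c ^ q * μ.real {x | c < u x} ≤ ∫ x, u x ^ q ∂μ := by
  refine le_trans ?_ (mul_meas_ge_le_integral_of_nonneg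
    (ae_of_all _ fun x => rpow_nonneg (hu₀ x) q) hint (c ^ q))
  gcongr with x
  · exact measure_ne_top _ _
  · exact fun hx => rpow_le_rpow hc hx.le hq

lemma measure_lt_ne_zero_of_lt_essSup [NeZero μ] (hu₀ : ∀ x, 0 ≤ u x) {c : ℝ}
    (hc : c < essSup u μ) : μ {x | c < u x} ≠ 0 := fun h => by
  have hle : u ≤ᵐ[μ] fun _ => c := by
    rw [EventuallyLE, ae_iff]
    simpa only [not_le] using h
  exact hc.not_ge (essSup_le_of_ae_le c hle (isCoboundedUnder_le_of_le _ hu₀))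

lemma essSup_pos_of_not_ae_eq_zero (hu₀ : ∀ x, 0 ≤ u x) (hbdd : ∃ C, ∀ x, u x ≤ C)
    (hne : ¬ u =ᵐ[μ] 0) : 0 < essSup u μ := by
  obtain ⟨C, hC⟩ := hbdd
  by_contra! h
  refine hne ?_
  filter_upwards [ae_le_essSup ⟨C, eventually_map.2 (ae_of_all _ hC)⟩] with x hx
  exact le_antisymm (hx.trans h) (hu₀ x)

end

theorem moser_iteration_log_sup_bound_general
    {X : Type*} [MeasurableSpace X] (μ : Measure X) [IsProbabilityMeasure μ]
    (u : X → ℝ) (hu_meas : Measurable u) (hu_nonneg : ∀ x, 0 ≤ u x)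
    (hu_bdd : ∃ C : ℝ, ∀ x, u x ≤ C)
    (hu_ne : ¬ (u =ᵐ[μ] 0))
    (M : ℝ) (hM : M = essSup u μ)
    (τ β A K : ℝ) (hτ : 1 < τ) (hA : 1 ≤ A) (hK : 1 ≤ K)
    (hγ : β * τ / (τ - 1) < 1)
    (hiter : ∀ q : ℝ, 1 ≤ q →
      (∫ x, u x ^ (q * τ) ∂μ) ^ (1 / (q * τ)) ≤
        (A * q) ^ (1 / q) * K ^ (1 / q) * M ^ (β / q) * (∫ x, u x ^ q ∂μ) ^ (1 / q))
    (L : ℝ) (hL : ∫ x, u x ∂μ ≤ Real.exp L) :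
    Real.log M ≤ (1 / (1 - β * τ / (τ - 1))) *
      ((τ / (τ - 1)) * Real.log (A * K) + (τ / (τ - 1) ^ 2) * Real.log τ + L) := by
  obtain ⟨C, hC⟩ := hu_bdd
  have hM₀ : 0 < M := hM ▸ essSup_pos_of_not_ae_eq_zero hu_nonneg ⟨C, hC⟩ hu_ne
  have hA₀ : 0 < A := by linarith
  have hK₀ : 0 < K := by linarith
  have hbound : ∀ c, 0 < c → c < M →
      log c ≤ L + τ / (τ - 1) * log (A * K * M ^ β) + τ / (τ - 1) ^ 2 * log τ := by
    intro c hc hcM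
    refine log_le_of_moment_iteration (I := fun q => ∫ x, u x ^ q ∂μ) hτ (by positivity) hc
      (ENNReal.toReal_pos (measure_lt_ne_zero_of_lt_essSup hu_nonneg (hM ▸ hcM))
        (measure_ne_top _ _))
      (fun q hq => rpow_mul_measureReal_lt_le_integral_rpow hu_nonneg
        (integrable_rpow_of_le_s2 hu_meas hu_nonneg hC (by linarith)) hc.le (by linarith))
      (fun q hq => (hiter q hq).trans_eq (by
        rw [mul_rpow_one_div_of_nonneg hA₀.le hK₀.le hM₀.le (by linarith)]))
      (by simpa only [rpow_one] using hL)
  have h := log_le_of_forall_lt_log_le hM₀ hbound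
  rw [log_mul (by positivity) (by positivity), log_rpow hM₀] at h
  refine le_one_div_one_sub_mul_of_le_add_mul hγ ?_
  linarith [show τ / (τ - 1) * (β * log M) = β * τ / (τ - 1) * log M by ring]

/-- Quantitative sup-norm bound (combination of Steps 2 and 3 of the proof of the linear
`C⁰`-bound for the inverse Monge-Ampère flow): if a bounded nonnegative measurable function `u`
on a probability space, not a.e. zero, with essential supremum `M`, satisfies the one-step
iteration inequality `‖u‖_{qτ} ≤ (Aq)^{1/q} K^{1/q} M^{β/q} ‖u‖_q` for all `q ≥ 1`, where
`γ = βτ/(τ-1) < 1`, and if `‖u‖_{L¹} ≤ e^L`, then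
`log M ≤ (1/(1-γ)) ((τ/(τ-1)) log(AK) + (τ/(τ-1)²) log τ + L)`. -/
theorem moser_iteration_log_sup_bound
    {X : Type*} [MeasurableSpace X] (μ : Measure X) [IsProbabilityMeasure μ]
    (u : X → ℝ) (hu_meas : Measurable u) (hu_nonneg : ∀ x, 0 ≤ u x)
    (hu_bdd : ∃ C : ℝ, ∀ x, u x ≤ C)
    (hu_ne : ¬ (u =ᵐ[μ] 0))
    (M : ℝ) (hM : M = essSup u μ)
    (τ β A K : ℝ) (hτ : 1 < τ) (hβ : 0 ≤ β) (hA : 1 ≤ A) (hK : 1 ≤ K)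
    (hγ : β * τ / (τ - 1) < 1)
    (hiter : ∀ q : ℝ, 1 ≤ q →
      (∫ x, u x ^ (q * τ) ∂μ) ^ (1 / (q * τ)) ≤
        (A * q) ^ (1 / q) * K ^ (1 / q) * M ^ (β / q) * (∫ x, u x ^ q ∂μ) ^ (1 / q))
    (L : ℝ) (hL : ∫ x, u x ∂μ ≤ Real.exp L) :
    Real.log M ≤ (1 / (1 - β * τ / (τ - 1))) *
      ((τ / (τ - 1)) * Real.log (A * K) + (τ / (τ - 1) ^ 2) * Real.log τ + L) :=
  moser_iteration_log_sup_bound_general μ u hu_meas hu_nonneg hu_bdd hu_ne M hM τ β A K hτ hA hK hγ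
    hiter L hL
end
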